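/- Let k₁, k₂ ∈ ℕ, k₃ ∈ ℕ with k₃ ≥ 1, and define w : ℝ³ → ℝ by w(x) = cos(2πk₁x₁/l₁)·cos(2πk₂x₂/l₂)·sin(πk₃x₃/l₃⁺), and the vector fields H := (0, ∂₃w, −∂₂w) and E := (−iωε)⁻¹·(−∂₂²w − ∂₃²w, ∂₁∂₂w, ∂₁∂₃w). Then: (a) the first component H₁ vanishes identically on ℝ³; (b) E₁(x) = 0 and E₂(x) = 0 whenever x₃ = 0 or x₃ = l₃⁺; (c) E and H are l₁-periodic in x₁ and l₂-periodic in x₂; and (d) E₁ is not identically zero on Ω₊ := (0,l₁)×(0,l₂)×(0,l₃⁺). -/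

import Mathlib

open Real Complex Filter Topology

/-- Partial derivative in the first coordinate. -/
noncomputable def pd1 {F : Type*} [NormedAddCommGroup F] [NormedSpace ℝ F]
    (f : ℝ × ℝ × ℝ → F) (x : ℝ × ℝ × ℝ) : F :=
  deriv (fun t => f (t, x.2.1, x.2.2)) x.1

/-- Partial derivative in the second coordinate. -/
noncomputable def pd2 {F : Type*} [NormedAddCommGroup F] [NormedSpace ℝ F]
    (f : ℝ × ℝ × ℝ → F) (x : ℝ × ℝ × ℝ) : F :=
  deriv (fun t => f (x.1, t, x.2.2)) x.2.1

/-- Partial derivative in the third coordinate. -/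
noncomputable def pd3 {F : Type*} [NormedAddCommGroup F] [NormedSpace ℝ F]
    (f : ℝ × ℝ × ℝ → F) (x : ℝ × ℝ × ℝ) : F :=
  deriv (fun t => f (x.1, x.2.1, t)) x.2.2

/-- Curl of a complex vector field on ℝ³. -/
noncomputable def curl3 (F : ℝ × ℝ × ℝ → ℂ × ℂ × ℂ) (x : ℝ × ℝ × ℝ) : ℂ × ℂ × ℂ :=
  (pd2 (fun y => (F y).2.2) x - pd3 (fun y => (F y).2.1) x,
   pd3 (fun y => (F y).1) x - pd1 (fun y => (F y).2.2) x,
   pd1 (fun y => (F y).2.1) x - pd2 (fun y => (F y).1) x)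

/-- Divergence of a complex vector field on ℝ³. -/
noncomputable def div3 (F : ℝ × ℝ × ℝ → ℂ × ℂ × ℂ) (x : ℝ × ℝ × ℝ) : ℂ :=
  pd1 (fun y => (F y).1) x + pd2 (fun y => (F y).2.1) x + pd3 (fun y => (F y).2.2) x

/-- Laplacian of a scalar function on ℝ³. -/
noncomputable def lap {F : Type*} [NormedAddCommGroup F] [NormedSpace ℝ F]
    (f : ℝ × ℝ × ℝ → F) (x : ℝ × ℝ × ℝ) : F :=
  pd1 (pd1 f) x + pd2 (pd2 f) x + pd3 (pd3 f) x

/-- Gradient of a complex scalar function on ℝ³. -/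
noncomputable def grad3 (f : ℝ × ℝ × ℝ → ℂ) (x : ℝ × ℝ × ℝ) : ℂ × ℂ × ℂ :=
  (pd1 f x, pd2 f x, pd3 f x)

/-!
Write `w = cos (a₁ x₁) cos (a₂ x₂) sin (b x₃)` with `a₁ = 2πk₁/l₁`, `a₂ = 2πk₂/l₂`, `b = πk₃/l₃⁺`.
Every partial derivative of such a separated product is again separated, with the corresponding
factor differentiated. Hence `-∂₂²w - ∂₃²w = (a₂² + b²) w` and `∂₁∂₂w` keeps the factor `sin (b x₃)`,
so `E₁` and `E₂` vanish where `sin (b x₃)` does, i.e. on `x₃ = 0` and `x₃ = l₃⁺`. Periodicity of `w`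
passes to its partial derivatives. Finally `b > 0`, so `E₁` is a nonzero multiple of `w`, which is
nonzero at points of `Ω₊` close enough to the corner `0`.
-/

namespace Function.Periodic

variable {F : Type*} [NormedAddCommGroup F] [NormedSpace ℝ F] {f : ℝ × ℝ × ℝ → F}
  {v : ℝ × ℝ × ℝ}

theorem pd1 (hf : Periodic f v) : Periodic (pd1 f) v := fun x => by
  simp only [_root_.pd1, Prod.fst_add, Prod.snd_add]
  rw [← deriv_comp_add_const]
  congr 1
  funext t
  exact hf (t, x.2.1, x.2.2)

theorem pd2 (hf : Periodic f v) : Periodic (pd2 f) v := fun x => by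
  simp only [_root_.pd2, Prod.fst_add, Prod.snd_add]
  rw [← deriv_comp_add_const]
  congr 1
  funext t
  exact hf (x.1, t, x.2.2)

theorem pd3 (hf : Periodic f v) : Periodic (pd3 f) v := fun x => by
  simp only [_root_.pd3, Prod.fst_add, Prod.snd_add]
  rw [← deriv_comp_add_const]
  congr 1
  funext t
  exact hf (x.1, x.2.1, t)

end Function.Periodic

def sepProd (f g h : ℝ → ℝ) (x : ℝ × ℝ × ℝ) : ℂ :=
  ((f x.1 * g x.2.1 * h x.2.2 : ℝ) : ℂ)

section sepProd

variable {f g h f' g' h' : ℝ → ℝ}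

theorem pd1_sepProd (hf : ∀ t, HasDerivAt f (f' t) t) : pd1 (sepProd f g h) = sepProd f' g h :=
  funext fun x => ((((hf x.1).mul_const (g x.2.1)).mul_const (h x.2.2)).ofReal_comp).deriv

theorem pd2_sepProd (hg : ∀ t, HasDerivAt g (g' t) t) : pd2 (sepProd f g h) = sepProd f g' h :=
  funext fun x => ((((hg x.2.1).const_mul (f x.1)).mul_const (h x.2.2)).ofReal_comp).deriv

theorem pd3_sepProd (hh : ∀ t, HasDerivAt h (h' t) t) : pd3 (sepProd f g h) = sepProd f g h' :=
  funext fun x => (((hh x.2.2).const_mul (f x.1 * g x.2.1)).ofReal_comp).deriv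

theorem sepProd_eq_zero_of_right {x : ℝ × ℝ × ℝ} (hx : h x.2.2 = 0) : sepProd f g h x = 0 := by
  simp [sepProd, hx]

theorem sepProd_periodic_fst {l : ℝ} (hf : Function.Periodic f l) :
    Function.Periodic (sepProd f g h) (l, 0, 0) := fun x => by
  simp [sepProd, hf x.1]

theorem sepProd_periodic_snd {l : ℝ} (hg : Function.Periodic g l) :
    Function.Periodic (sepProd f g h) (0, l, 0) := fun x => by
  simp [sepProd, hg x.2.1]

end sepProd

section trig

variable (a t : ℝ)

theorem hasDerivAt_cos_mul : HasDerivAt (fun t => Real.cos (a * t)) (-(a * Real.sin (a * t))) t := by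
  simpa [mul_comm] using ((hasDerivAt_id t).const_mul a).cos

theorem hasDerivAt_sin_mul : HasDerivAt (fun t => Real.sin (a * t)) (a * Real.cos (a * t)) t := by
  simpa [mul_comm] using ((hasDerivAt_id t).const_mul a).sin

theorem hasDerivAt_neg_mul_sin_mul :
    HasDerivAt (fun t => -(a * Real.sin (a * t))) (-(a * (a * Real.cos (a * t)))) t :=
  ((hasDerivAt_sin_mul a t).const_mul a).neg

theorem hasDerivAt_mul_cos_mul :
    HasDerivAt (fun t => a * Real.cos (a * t)) (a * -(a * Real.sin (a * t))) t :=
  (hasDerivAt_cos_mul a t).const_mul a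

theorem cos_mul_periodic {l : ℝ} {k : ℕ} (h : a * l = k * (2 * π)) :
    Function.Periodic (fun t => Real.cos (a * t)) l := fun t => by
  simp only [mul_add, h, Real.cos_add_nat_mul_two_pi]

theorem eventually_cos_mul_ne_zero : ∀ᶠ t in 𝓝[>] 0, Real.cos (a * t) ≠ 0 := by
  refine nhdsWithin_le_nhds ((Continuous.tendsto (by fun_prop) 0).eventually_ne ?_)
  simp

theorem eventually_sin_mul_ne_zero {b : ℝ} (hb : 0 < b) : ∀ᶠ t in 𝓝[>] 0, Real.sin (b * t) ≠ 0 := by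
  filter_upwards [Ioo_mem_nhdsGT (div_pos pi_pos hb)] with t ht
  refine (Real.sin_pos_of_pos_of_lt_pi (mul_pos hb ht.1) ?_).ne'
  calc b * t < b * (π / b) := by gcongr; exact ht.2
    _ = π := mul_div_cancel₀ π hb.ne'

end trig

noncomputable def cavityMode (a₁ a₂ b : ℝ) : ℝ × ℝ × ℝ → ℂ :=
  sepProd (fun t => Real.cos (a₁ * t)) (fun t => Real.cos (a₂ * t)) (fun t => Real.sin (b * t))

section cavityMode

variable {a₁ a₂ b : ℝ}

theorem neg_pd2_pd2_sub_pd3_pd3_cavityMode (x : ℝ × ℝ × ℝ) :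
    -pd2 (pd2 (cavityMode a₁ a₂ b)) x - pd3 (pd3 (cavityMode a₁ a₂ b)) x =
      ((a₂ ^ 2 + b ^ 2 : ℝ) : ℂ) * cavityMode a₁ a₂ b x := by
  rw [cavityMode, pd2_sepProd (hasDerivAt_cos_mul a₂),
    pd2_sepProd (hasDerivAt_neg_mul_sin_mul a₂),
    pd3_sepProd (hasDerivAt_sin_mul b), pd3_sepProd (hasDerivAt_mul_cos_mul b)]
  simp only [sepProd]
  push_cast
  ring

theorem cavityMode_eq_zero {x : ℝ × ℝ × ℝ} (hx : Real.sin (b * x.2.2) = 0) :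
    cavityMode a₁ a₂ b x = 0 :=
  sepProd_eq_zero_of_right hx

theorem pd1_pd2_cavityMode_eq_zero {x : ℝ × ℝ × ℝ} (hx : Real.sin (b * x.2.2) = 0) :
    pd1 (pd2 (cavityMode a₁ a₂ b)) x = 0 := by
  rw [cavityMode, pd2_sepProd (hasDerivAt_cos_mul a₂), pd1_sepProd (hasDerivAt_cos_mul a₁)]
  exact sepProd_eq_zero_of_right hx

theorem exists_cavityMode_ne_zero {l₁ l₂ l₃ : ℝ} (hl₁ : 0 < l₁) (hl₂ : 0 < l₂) (hl₃ : 0 < l₃)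
    (hb : 0 < b) :
    ∃ x : ℝ × ℝ × ℝ, (x.1 ∈ Set.Ioo 0 l₁ ∧ x.2.1 ∈ Set.Ioo 0 l₂ ∧ x.2.2 ∈ Set.Ioo 0 l₃) ∧
      cavityMode a₁ a₂ b x ≠ 0 := by
  obtain ⟨t₁, ht₁, hx₁⟩ := ((eventually_cos_mul_ne_zero a₁).and (Ioo_mem_nhdsGT hl₁)).exists
  obtain ⟨t₂, ht₂, hx₂⟩ := ((eventually_cos_mul_ne_zero a₂).and (Ioo_mem_nhdsGT hl₂)).exists
  obtain ⟨t₃, ht₃, hx₃⟩ := ((eventually_sin_mul_ne_zero hb).and (Ioo_mem_nhdsGT hl₃)).exists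
  exact ⟨(t₁, t₂, t₃), ⟨hx₁, hx₂, hx₃⟩, by
    simpa only [cavityMode, sepProd, ne_eq, Complex.ofReal_eq_zero, mul_eq_zero, not_or] using
      ⟨⟨ht₁, ht₂⟩, ht₃⟩⟩

end cavityMode

theorem stmt5_general (l₁ l₂ l₃p ε ω : ℝ)
    (hl₁ : 0 < l₁) (hl₂ : 0 < l₂) (hl₃p : 0 < l₃p)
    (hε : 0 < ε) (hω : 0 < ω)
    (k₁ k₂ k₃ : ℕ) (hk₃ : 1 ≤ k₃)
    (w : ℝ × ℝ × ℝ → ℂ)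
    (hw : w = fun x => ((Real.cos (2 * π * (k₁ : ℝ) * x.1 / l₁) *
        Real.cos (2 * π * (k₂ : ℝ) * x.2.1 / l₂) *
        Real.sin (π * (k₃ : ℝ) * x.2.2 / l₃p) : ℝ) : ℂ))
    (E H : ℝ × ℝ × ℝ → ℂ × ℂ × ℂ)
    (hH : H = fun x => (0, pd3 w x, -(pd2 w x)))
    (hE : E = fun x => (-(Complex.I * (ω : ℂ) * (ε : ℂ)))⁻¹ •
        ((-(pd2 (pd2 w) x) - pd3 (pd3 w) x, pd1 (pd2 w) x, pd1 (pd3 w) x) : ℂ × ℂ × ℂ)) :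
    (∀ x : ℝ × ℝ × ℝ, (H x).1 = 0) ∧
    (∀ x : ℝ × ℝ × ℝ, x.2.2 = 0 ∨ x.2.2 = l₃p → (E x).1 = 0 ∧ (E x).2.1 = 0) ∧
    (∀ x : ℝ × ℝ × ℝ, E (x.1 + l₁, x.2.1, x.2.2) = E x ∧ E (x.1, x.2.1 + l₂, x.2.2) = E x ∧
      H (x.1 + l₁, x.2.1, x.2.2) = H x ∧ H (x.1, x.2.1 + l₂, x.2.2) = H x) ∧
    (∃ x : ℝ × ℝ × ℝ,
      (x.1 ∈ Set.Ioo 0 l₁ ∧ x.2.1 ∈ Set.Ioo 0 l₂ ∧ x.2.2 ∈ Set.Ioo 0 l₃p) ∧ (E x).1 ≠ 0) := by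
  set b := π * k₃ / l₃p
  have hw_mode : w = cavityMode (2 * π * k₁ / l₁) (2 * π * k₂ / l₂) b := by
    rw [hw]
    funext x
    simp only [cavityMode, sepProd, b]
    ring_nf
  have hper₁ : Function.Periodic w (l₁, 0, 0) :=
    hw_mode ▸ sepProd_periodic_fst (cos_mul_periodic _ (k := k₁) (by field_simp))
  have hper₂ : Function.Periodic w (0, l₂, 0) :=
    hw_mode ▸ sepProd_periodic_snd (cos_mul_periodic _ (k := k₂) (by field_simp))
  have hshift : ∀ x : ℝ × ℝ × ℝ,
      (x.1 + l₁, x.2.1, x.2.2) = x + (l₁, 0, 0) ∧ (x.1, x.2.1 + l₂, x.2.2) = x + (0, l₂, 0) :=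
    fun x => by simp [Prod.ext_iff]
  have hc : (-(Complex.I * (ω : ℂ) * (ε : ℂ)))⁻¹ ≠ 0 := by simp [hω.ne', hε.ne']
  subst hE hH
  refine ⟨fun x => rfl, fun x hx => ?_, fun x => ?_, ?_⟩
  · have hs : Real.sin (b * x.2.2) = 0 := by
      rcases hx with h | h
      · simp [h]
      · rw [h, div_mul_cancel₀ _ hl₃p.ne', mul_comm, Real.sin_nat_mul_pi]
    simp only [Prod.smul_mk, smul_eq_mul, hw_mode, neg_pd2_pd2_sub_pd3_pd3_cavityMode,
      cavityMode_eq_zero hs, pd1_pd2_cavityMode_eq_zero hs, mul_zero, and_self]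
  · rw [(hshift x).1, (hshift x).2]
    simp only [hper₁.pd2.pd2 x, hper₁.pd3.pd3 x, hper₁.pd2.pd1 x, hper₁.pd3.pd1 x, hper₁.pd2 x,
      hper₁.pd3 x, hper₂.pd2.pd2 x, hper₂.pd3.pd3 x, hper₂.pd2.pd1 x, hper₂.pd3.pd1 x,
      hper₂.pd2 x, hper₂.pd3 x, and_self]
  · have hb : 0 < b := div_pos (mul_pos pi_pos (by exact_mod_cast hk₃)) hl₃p
    obtain ⟨x, hx, hne⟩ := exists_cavityMode_ne_zero (a₁ := 2 * π * k₁ / l₁)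
      (a₂ := 2 * π * k₂ / l₂) hl₁ hl₂ hl₃p hb
    refine ⟨x, hx, ?_⟩
    simp only [Prod.smul_mk, smul_eq_mul, hw_mode, neg_pd2_pd2_sub_pd3_pd3_cavityMode]
    exact mul_ne_zero hc (mul_ne_zero (Complex.ofReal_ne_zero.mpr (by positivity)) hne)

/-- boundary, interface, periodicity and non-triviality properties of the
upper-half-domain eigenfunction candidate. -/
theorem stmt5 (l₁ l₂ l₃p l₃m ε μ ω : ℝ)
    (hl₁ : 0 < l₁) (hl₂ : 0 < l₂) (hl₃p : 0 < l₃p) (hl₃m : 0 < l₃m)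
    (hε : 0 < ε) (hμ : 0 < μ) (hω : 0 < ω)
    (k₁ k₂ k₃ : ℕ) (hk₃ : 1 ≤ k₃)
    (w : ℝ × ℝ × ℝ → ℂ)
    (hw : w = fun x => ((Real.cos (2 * π * (k₁ : ℝ) * x.1 / l₁) *
        Real.cos (2 * π * (k₂ : ℝ) * x.2.1 / l₂) *
        Real.sin (π * (k₃ : ℝ) * x.2.2 / l₃p) : ℝ) : ℂ))
    (E H : ℝ × ℝ × ℝ → ℂ × ℂ × ℂ)
    (hH : H = fun x => (0, pd3 w x, -(pd2 w x)))
    (hE : E = fun x => (-(Complex.I * (ω : ℂ) * (ε : ℂ)))⁻¹ •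
        ((-(pd2 (pd2 w) x) - pd3 (pd3 w) x, pd1 (pd2 w) x, pd1 (pd3 w) x) : ℂ × ℂ × ℂ)) :
    (∀ x : ℝ × ℝ × ℝ, (H x).1 = 0) ∧
    (∀ x : ℝ × ℝ × ℝ, x.2.2 = 0 ∨ x.2.2 = l₃p → (E x).1 = 0 ∧ (E x).2.1 = 0) ∧
    (∀ x : ℝ × ℝ × ℝ, E (x.1 + l₁, x.2.1, x.2.2) = E x ∧ E (x.1, x.2.1 + l₂, x.2.2) = E x ∧
      H (x.1 + l₁, x.2.1, x.2.2) = H x ∧ H (x.1, x.2.1 + l₂, x.2.2) = H x) ∧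
    (∃ x : ℝ × ℝ × ℝ,
      (x.1 ∈ Set.Ioo 0 l₁ ∧ x.2.1 ∈ Set.Ioo 0 l₂ ∧ x.2.2 ∈ Set.Ioo 0 l₃p) ∧ (E x).1 ≠ 0) :=
  stmt5_general l₁ l₂ l₃p ε ω hl₁ hl₂ hl₃p hε hω k₁ k₂ k₃ hk₃ w hw E H hH hE
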